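/- Let j:ℕ→ℕ be defined by j(n)=⌊φn⌋−1 if n∈R_{1,0}, j(n)=⌊(φ−1)n⌋+1 if n∈R_{1,1}, and j(n)=⌊φn⌋+1 if n∈R_{2,0}. If n∈R_{1,0}, then j(n)∈R_{1,0} and j(j(j(n))) = j(j(n)) + j(n) − 2. -/

import Mathlib

/-- The golden ratio φ = (1 + √5)/2. -/
noncomputable def phi : ℝ := (1 + Real.sqrt 5) / 2

/-- The lower Wythoff sequence a(n) = ⌊nφ⌋. -/
noncomputable def wa (n : ℕ) : ℕ := ⌊(n : ℝ) * phi⌋₊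

/-- f_{i,j}(n) = F(i+1)·a(n) + F(i)·n − j. -/
noncomputable def fij (i : ℕ) (j : ℤ) (n : ℕ) : ℤ :=
  (Nat.fib (i + 1) : ℤ) * wa n + (Nat.fib i : ℤ) * n - j

/-- R_{i,j} = { f_{i,j}(n) : n ∈ ℕ, n ≥ 1 }. -/
def R (i : ℕ) (j : ℤ) : Set ℤ := {m | ∃ n : ℕ, 0 < n ∧ fij i j n = m}

open scoped Classical in
/-- j(n) = ⌊φn⌋−1 if n ∈ R_{1,0}, ⌊(φ−1)n⌋+1 if n ∈ R_{1,1}, ⌊φn⌋+1 if n ∈ R_{2,0}. -/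
noncomputable def jmap (n : ℕ) : ℕ :=
  if (n : ℤ) ∈ R 1 0 then wa n - 1
  else if (n : ℤ) ∈ R 1 1 then ⌊(phi - 1) * (n : ℝ)⌋₊ + 1
  else wa n + 1

/-!
Write `b(m) = a(m) + m`, so that `R_{1,0}` is the upper Wythoff sequence. With `θ = {mφ} ∈ (0, 1)`
and `φ² = φ + 1` one gets `a(m)·φ = a(m) + m − θ(φ − 1)` and `b(m)·φ = 2a(m) + m + θ(2 − φ)`, whence
`a(a(m)) = a(m) + m − 1` and `a(b(m)) = 2a(m) + m`. Hence `j(b(m)) = a(b(m)) − 1 = b(a(m))`, so `j`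
maps `R_{1,0}` into itself and the three iterates of `j` at `b(m)` are `b(a(m))`, `b(a²(m))`,
`b(a³(m))`; the recurrence for `a ∘ a` turns the claimed identity into linear arithmetic.
-/

lemma one_lt_phi : 1 < phi := Real.one_lt_goldenRatio

lemma phi_lt_two : phi < 2 := Real.goldenRatio_lt_two

lemma phi_sq : phi ^ 2 = phi + 1 := Real.goldenRatio_sq

lemma wa_pos {m : ℕ} (hm : 0 < m) : 0 < wa m := by
  have hm1 : (1 : ℝ) ≤ m := by exact_mod_cast hm
  exact Nat.floor_pos.mpr (by nlinarith [one_lt_phi])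

lemma fract_natCast_mul_phi_pos {m : ℕ} (hm : 0 < m) : 0 < Int.fract ((m : ℝ) * phi) :=
  Int.fract_pos.mpr ((Real.goldenRatio_irrational.natCast_mul hm.ne').ne_int _)

lemma natCast_mul_phi_eq (m : ℕ) : (m : ℝ) * phi = wa m + Int.fract ((m : ℝ) * phi) := by
  rw [wa, Int.fract, ← Int.natCast_floor_eq_floor (by positivity [one_lt_phi])]
  push_cast
  ring

lemma wa_mul_phi (m : ℕ) :
    (wa m : ℝ) * phi = wa m + m - Int.fract ((m : ℝ) * phi) * (phi - 1) := by
  linear_combination m * phi_sq - (phi - 1) * natCast_mul_phi_eq m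

lemma wa_wa {m : ℕ} (hm : 0 < m) : wa (wa m) = wa m + m - 1 := by
  have hθ := fract_natCast_mul_phi_pos hm
  have hθ1 := Int.fract_lt_one ((m : ℝ) * phi)
  have hφ1 := one_lt_phi
  have hφ2 := phi_lt_two
  rw [wa, Nat.floor_eq_iff (by positivity [hφ1]), Nat.cast_sub (by omega), wa_mul_phi]
  push_cast
  constructor <;> nlinarith

lemma wa_wa_add_self {m : ℕ} (hm : 0 < m) : wa (wa m + m) = 2 * wa m + m := by
  have hθ := fract_natCast_mul_phi_pos hm
  have hθ1 := Int.fract_lt_one ((m : ℝ) * phi)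
  have hφ1 := one_lt_phi
  have hφ2 := phi_lt_two
  have hb : ((wa m + m : ℕ) : ℝ) * phi = 2 * wa m + m + Int.fract ((m : ℝ) * phi) * (2 - phi) := by
    push_cast
    linear_combination wa_mul_phi m + natCast_mul_phi_eq m
  rw [wa, Nat.floor_eq_iff (by positivity [hφ1]), hb]
  push_cast
  constructor <;> nlinarith

lemma natCast_mem_R_one_zero_iff {n : ℕ} : (n : ℤ) ∈ R 1 0 ↔ ∃ m, 0 < m ∧ wa m + m = n := by
  simp only [R, fij, Set.mem_ofPred_eq]
  norm_num
  exact_mod_cast Iff.rfl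

lemma jmap_wa_add_self {m : ℕ} (hm : 0 < m) : jmap (wa m + m) = wa (wa m) + wa m := by
  rw [jmap, if_pos (natCast_mem_R_one_zero_iff.mpr ⟨m, hm, rfl⟩), wa_wa_add_self hm, wa_wa hm]
  have := wa_pos hm
  omega

theorem stmt_12_general (n : ℕ) (hmem : (n : ℤ) ∈ R 1 0) :
    (jmap n : ℤ) ∈ R 1 0 ∧
    (jmap (jmap (jmap n)) : ℤ) = (jmap (jmap n) : ℤ) + (jmap n : ℤ) - 2 := by
  obtain ⟨m, hm, rfl⟩ := natCast_mem_R_one_zero_iff.mp hmem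
  have hx := wa_pos hm
  have hy := wa_pos hx
  rw [jmap_wa_add_self hm, jmap_wa_add_self hx, jmap_wa_add_self hy]
  refine ⟨natCast_mem_R_one_zero_iff.mpr ⟨_, hx, rfl⟩, ?_⟩
  have := wa_wa hx
  have := wa_wa hy
  omega

theorem stmt_12 (n : ℕ) (hn : 0 < n) (hmem : (n : ℤ) ∈ R 1 0) :
    (jmap n : ℤ) ∈ R 1 0 ∧
    (jmap (jmap (jmap n)) : ℤ) = (jmap (jmap n) : ℤ) + (jmap n : ℤ) - 2 :=
  stmt_12_general n hmem
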